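/- arXiv:1802.05871 — 3 statements merged into one kernel-verified Lean document; each statement's English description precedes it below -/
import Mathlib

section
/- Let Γ be an n-valent GKM_k graph with k ≥ 2. Then for any vertex v of Γ and any l edges e_1,…,e_l meeting at v with 1 ≤ l ≤ k−1, there exists a unique l-dimensional face of Γ (i.e., a connected l-valent subgraph invariant under the connection) containing e_1,…,e_l. -/
/-- An abstract graph with oriented edges: `ini e` is the initial vertex of the
oriented edge `e`, and `bar e` is `e` with the opposite orientation. -/
structure PreGraph where
  V : Type
  E : Type
  ini : E → V
  bar : E → E
  bar_invol : ∀ e, bar (bar e) = e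

namespace PreGraph

noncomputable section

variable (G : PreGraph)

/-- The terminal vertex of an oriented edge. -/
def ter (e : G.E) : G.V := G.ini (G.bar e)

/-- A connection on a graph: for every oriented edge `e` a bijection from the
edges starting at `ini e` to the edges starting at `ter e` (totalised to all
edges), with `∇_e e = ē` and `∇_{ē} = ∇_e⁻¹`. -/
structure Connection where
  nabla : G.E → G.E → G.E
  ini_nabla : ∀ e f, G.ini (nabla e f) = G.ter e
  nabla_self : ∀ e, nabla e e = G.bar e
  nabla_inv : ∀ e f, G.ini f = G.ini e → nabla (G.bar e) (nabla e f) = f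

variable (N : G.Connection)

/-- The graph is connected. -/
def Connected : Prop :=
  ∀ v w : G.V, Relation.ReflTransGen (fun a b => ∃ e : G.E, G.ini e = a ∧ G.ter e = b) v w

/-- The graph is `n`-valent: exactly `n` oriented edges start at every vertex. -/
def Valent (n : ℕ) : Prop := ∀ v : G.V, {e : G.E | G.ini e = v}.ncard = n

/-- The number of vertices of a subgraph given by a set of oriented edges. -/
def Vcount (S : Set G.E) : ℕ := (G.ini '' S).ncard

/-- An `l`-dimensional face of a graph with connection: a nonempty connected
`l`-valent `∇`-invariant subgraph (given by its set of oriented edges, closed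
under orientation reversal). -/
def IsFace (l : ℕ) (S : Set G.E) : Prop :=
  S.Nonempty ∧
  (∀ e ∈ S, G.bar e ∈ S) ∧
  (∀ e ∈ S, ∀ f ∈ S, G.ini f = G.ini e → N.nabla e f ∈ S) ∧
  (∀ v ∈ G.ini '' S, {e : G.E | e ∈ S ∧ G.ini e = v}.ncard = l) ∧
  (∀ v ∈ G.ini '' S, ∀ w ∈ G.ini '' S,
    Relation.ReflTransGen (fun a b => ∃ g ∈ S, G.ini g = a ∧ G.ter g = b) v w)

/-- Two edges at a common vertex span the two-dimensional face `S`. -/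
def SpanFace (e e' : G.E) (S : Set G.E) : Prop := G.IsFace N 2 S ∧ e ∈ S ∧ e' ∈ S

/-- Two edges span a triangle (a 2-face with three vertices). -/
def SpanTriangle (e e' : G.E) : Prop := ∃ S, G.SpanFace N e e' S ∧ G.Vcount S = 3

/-- Two edges span a biangle (a 2-face with two vertices). -/
def SpanBiangle (e e' : G.E) : Prop := ∃ S, G.SpanFace N e e' S ∧ G.Vcount S = 2

/-- Two edges span a square (a 2-face with four vertices). -/
def SpanSquare (e e' : G.E) : Prop := ∃ S, G.SpanFace N e e' S ∧ G.Vcount S = 4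

/-- A subgraph has the combinatorial type of a simplex `Δ^k`
iff all its 2-faces are triangles. -/
def SimplexType (S : Set G.E) : Prop := ∀ T ⊆ S, G.IsFace N 2 T → G.Vcount T = 3

/-- A subgraph has the combinatorial type of `Σ^k` iff all its 2-faces are biangles. -/
def SigmaType (S : Set G.E) : Prop := ∀ T ⊆ S, G.IsFace N 2 T → G.Vcount T = 2

/-- The five possible combinatorial types of small three-dimensional faces:
`Σ³` (2 vertices), `Δ³` (4 vertices, all 2-faces triangles), `Σ²×I` (4 vertices,
2-faces biangles and squares), `Δ²×I` (6 vertices, 2-faces triangles and squares),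
`I³` (8 vertices, all 2-faces squares). -/
def SmallType (S : Set G.E) : Prop :=
  G.Vcount S = 2 ∨
  (G.Vcount S = 4 ∧ G.SimplexType N S) ∨
  (G.Vcount S = 4 ∧ ∀ T ⊆ S, G.IsFace N 2 T → G.Vcount T = 2 ∨ G.Vcount T = 4) ∨
  (G.Vcount S = 6 ∧ ∀ T ⊆ S, G.IsFace N 2 T → G.Vcount T = 3 ∨ G.Vcount T = 4) ∨
  (G.Vcount S = 8 ∧ ∀ T ⊆ S, G.IsFace N 2 T → G.Vcount T = 4)

/-- A graph with small three-dimensional faces: connected, any two (resp. three)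
distinct edges at a vertex span a unique 2-face (resp. 3-face), and every
3-dimensional face has one of the five small combinatorial types. -/
def SmallFaces : Prop :=
  G.Connected ∧
  (∀ e e' : G.E, G.ini e = G.ini e' → e ≠ e' → ∃! S, G.SpanFace N e e' S) ∧
  (∀ e₁ e₂ e₃ : G.E, G.ini e₁ = G.ini e₂ → G.ini e₂ = G.ini e₃ →
    e₁ ≠ e₂ → e₁ ≠ e₃ → e₂ ≠ e₃ →
    ∃! S, G.IsFace N 3 S ∧ e₁ ∈ S ∧ e₂ ∈ S ∧ e₃ ∈ S) ∧
  (∀ S, G.IsFace N 3 S → G.SmallType N S)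

/-- A subgraph is "simplex-like" if it is a face of some dimension whose
combinatorial type is that of `Δ^k` or of `Σ^k`. -/
def IsSimplexLike (S : Set G.E) : Prop :=
  (∃ l, G.IsFace N l S) ∧ (G.SimplexType N S ∨ G.SigmaType N S)

/-- A maximal simplex at the vertex `x`. -/
def MaxSimplexAt (x : G.V) (S : Set G.E) : Prop :=
  G.IsSimplexLike N S ∧ x ∈ G.ini '' S ∧
  ∀ S', S ⊆ S' → G.IsSimplexLike N S' → x ∈ G.ini '' S' → S' = S

/-- A GKM_k labelling of a graph with connection, with weights (defined up to
sign; a lift has been chosen) in an `m`-dimensional rational vector space: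
any `k` weights at a common vertex are linearly independent, and the
connection satisfies the GKM compatibility relation. -/
structure GKMLabel (m k : ℕ) where
  w : G.E → (Fin m → ℚ)
  label_bar : ∀ e, w (G.bar e) = w e ∨ w (G.bar e) = - w e
  indep : ∀ (s : Finset G.E) (v : G.V), (∀ e ∈ s, G.ini e = v) → s.card ≤ k →
    LinearIndependent ℚ (fun e : s => w e.1)
  conn_rel : ∀ e f, G.ini f = G.ini e →
    ∃ p q : ℚ, w (N.nabla e f) = p • w f + q • w e

end
end PreGraph

open PreGraph

/-!
The face is forced to be the closure `C` of `{e₁, …, e_l}` under reversal and the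
connection. By the GKM relation every weight of an edge of `C` lies in the span of
`α(e₁), …, α(e_l)`, a space of dimension at most `l < k`, so `k`-independence allows at
most `l` edges of `C` at any vertex; at `v` there are exactly `l`. Since `∇_e` is
injective and `∇_{ē} = ∇_e⁻¹`, this count is the same at both ends of an edge of `C`,
so `C` is an `l`-valent face. Any `l`-face containing the `e_i` contains `C`, and an
`l`-valent invariant subgraph of a connected `l`-valent graph is all of it.
-/

namespace PreGraph

variable {G : PreGraph} {N : G.Connection}

lemma ter_bar (e : G.E) : G.ter (G.bar e) = G.ini e := by
  simp [ter, G.bar_invol]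

variable (G) in
def edgesAt (S : Set G.E) (x : G.V) : Set G.E := {e | e ∈ S ∧ G.ini e = x}

variable (G) in
def Adj (S : Set G.E) (a b : G.V) : Prop := ∃ g ∈ S, G.ini g = a ∧ G.ter g = b

lemma adj_symm {S : Set G.E} (hS : ∀ e ∈ S, G.bar e ∈ S) {a b : G.V} :
    G.Adj S a b → G.Adj S b a := by
  rintro ⟨g, hg, rfl, rfl⟩
  exact ⟨G.bar g, hS g hg, rfl, ter_bar g⟩

lemma reflTransGen_adj_symm {S : Set G.E} (hS : ∀ e ∈ S, G.bar e ∈ S) {a b : G.V}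
    (h : Relation.ReflTransGen (G.Adj S) a b) : Relation.ReflTransGen (G.Adj S) b a :=
  Relation.ReflTransGen.mono (fun _ _ => adj_symm hS) _ _ (Relation.reflTransGen_swap.mpr h)

namespace Connection

structure IsInvariant (N : G.Connection) (S : Set G.E) : Prop where
  bar_mem : ∀ e ∈ S, G.bar e ∈ S
  nabla_mem : ∀ e ∈ S, ∀ f ∈ S, G.ini f = G.ini e → N.nabla e f ∈ S

inductive Closure (N : G.Connection) (s : Set G.E) : Set G.E
  | of_mem : ∀ e ∈ s, Closure N s e
  | bar : ∀ e, Closure N s e → Closure N s (G.bar e)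
  | nabla : ∀ e f, Closure N s e → Closure N s f → G.ini f = G.ini e →
      Closure N s (N.nabla e f)

variable {s : Set G.E}

lemma subset_closure : s ⊆ N.Closure s := Closure.of_mem

lemma isInvariant_closure : N.IsInvariant (N.Closure s) :=
  ⟨Closure.bar, fun e he f hf hef => Closure.nabla e f he hf hef⟩

lemma closure_subset {T : Set G.E} (hsT : s ⊆ T) (hT : N.IsInvariant T) :
    N.Closure s ⊆ T := by
  intro e he
  induction he with
  | of_mem e he => exact hsT he
  | bar e _ ih => exact hT.bar_mem e ih
  | nabla e f _ _ h ihe ihf => exact hT.nabla_mem e ihe f ihf h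

lemma reachable_of_mem_closure {v : G.V} (hv : ∀ e ∈ s, G.ini e = v) {e : G.E}
    (he : e ∈ N.Closure s) :
    Relation.ReflTransGen (G.Adj (N.Closure s)) v (G.ini e) ∧
      Relation.ReflTransGen (G.Adj (N.Closure s)) v (G.ter e) := by
  induction he with
  | of_mem e hes =>
    rw [hv e hes]
    exact ⟨.refl, .single ⟨e, subset_closure hes, hv e hes, rfl⟩⟩
  | bar e _ ih =>
    rw [ter_bar]
    exact ⟨ih.2, ih.1⟩
  | nabla e f hce hcf hef ihe _ =>
    rw [N.ini_nabla]
    exact ⟨ihe.2, ihe.2.tail ⟨_, Closure.nabla e f hce hcf hef, N.ini_nabla e f, rfl⟩⟩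

namespace IsInvariant

variable [Finite G.E] {S : Set G.E}

lemma ncard_edgesAt_ini_le_ter (hS : N.IsInvariant S) {e : G.E} (he : e ∈ S) :
    (G.edgesAt S (G.ini e)).ncard ≤ (G.edgesAt S (G.ter e)).ncard := by
  refine Set.ncard_le_ncard_of_injOn (N.nabla e)
    (fun f hf => ⟨hS.nabla_mem e he f hf.1 hf.2, N.ini_nabla e f⟩) ?_
  intro f₁ hf₁ f₂ hf₂ h
  rw [← N.nabla_inv e f₁ hf₁.2, h, N.nabla_inv e f₂ hf₂.2]

lemma ncard_edgesAt_ter_eq_ini (hS : N.IsInvariant S) {e : G.E} (he : e ∈ S) :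
    (G.edgesAt S (G.ter e)).ncard = (G.edgesAt S (G.ini e)).ncard := by
  refine le_antisymm ?_ (hS.ncard_edgesAt_ini_le_ter he)
  have h := hS.ncard_edgesAt_ini_le_ter (hS.bar_mem e he)
  rw [ter_bar] at h
  exact h

lemma ncard_edgesAt_eq_of_reflTransGen (hS : N.IsInvariant S) {x y : G.V}
    (h : Relation.ReflTransGen (G.Adj S) x y) :
    (G.edgesAt S y).ncard = (G.edgesAt S x).ncard := by
  induction h with
  | refl => rfl
  | tail _ hstep ih =>
    obtain ⟨g, hg, rfl, rfl⟩ := hstep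
    exact (hS.ncard_edgesAt_ter_eq_ini hg).trans ih

end IsInvariant

end Connection

open Connection

lemma IsFace.isInvariant {l : ℕ} {S : Set G.E} (h : G.IsFace N l S) : N.IsInvariant S :=
  ⟨h.2.1, h.2.2.1⟩

lemma IsFace.eq_of_subset [Finite G.E] {l : ℕ} {S T : Set G.E} (hT : G.IsFace N l T)
    (hS : G.IsFace N l S) (hTS : T ⊆ S) : T = S := by
  obtain ⟨⟨e, he⟩, hT_bar, -, hT_val, -⟩ := hT
  obtain ⟨-, -, -, hS_val, hS_conn⟩ := hS
  have hedges : ∀ g ∈ S, G.ini g ∈ G.ini '' T → g ∈ T := by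
    intro g hg hx
    have hsub : G.edgesAt T (G.ini g) ⊆ G.edgesAt S (G.ini g) := fun f hf => ⟨hTS hf.1, hf.2⟩
    have heq := Set.eq_of_subset_of_ncard_le hsub
      ((hS_val _ (Set.image_mono hTS hx)).trans (hT_val _ hx).symm).le
    have hgS : g ∈ G.edgesAt S (G.ini g) := ⟨hg, rfl⟩
    rw [← heq] at hgS
    exact hgS.1
  have hverts : ∀ y ∈ G.ini '' S, y ∈ G.ini '' T := by
    intro y hy
    have hreach := hS_conn _ ⟨e, hTS he, rfl⟩ y hy
    clear hy
    induction hreach with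
    | refl => exact ⟨e, he, rfl⟩
    | tail _ hstep ih =>
      obtain ⟨g, hg, rfl, rfl⟩ := hstep
      exact ⟨G.bar g, hT_bar g (hedges g hg ih), rfl⟩
  exact hTS.antisymm fun g hg => hedges g hg (hverts _ ⟨g, hg, rfl⟩)

namespace GKMLabel

variable {m k : ℕ}

lemma weight_mem_span_of_mem_closure (L : G.GKMLabel N m k) {s : Set G.E} {e : G.E}
    (he : e ∈ N.Closure s) :
    L.w e ∈ Submodule.span ℚ (L.w '' s) := by
  induction he with
  | of_mem e he => exact Submodule.subset_span ⟨e, he, rfl⟩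
  | bar e _ ih =>
    rcases L.label_bar e with h | h <;> rw [h]
    · exact ih
    · exact Submodule.neg_mem _ ih
  | nabla e f _ _ h ihe ihf =>
    obtain ⟨p, q, hw⟩ := L.conn_rel e f h
    rw [hw]
    exact Submodule.add_mem _ (Submodule.smul_mem _ _ ihf) (Submodule.smul_mem _ _ ihe)

lemma ncard_le_finrank_of_weight_mem (L : G.GKMLabel N m k) {A : Set G.E} {x : G.V}
    (hA : ∀ e ∈ A, G.ini e = x) (W : Submodule ℚ (Fin m → ℚ)) (hW : ∀ e ∈ A, L.w e ∈ W)
    (hWk : Module.finrank ℚ W < k) : A.ncard ≤ Module.finrank ℚ W := by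
  by_contra! hA_large
  obtain ⟨B, hBA, hB⟩ := Set.exists_subset_card_eq (Nat.succ_le_of_lt hA_large)
  have hBfin : B.Finite := Set.finite_of_ncard_pos (by omega)
  have hcard : hBfin.toFinset.card = Module.finrank ℚ W + 1 := by
    rw [← Set.ncard_eq_toFinset_card B hBfin, hB]
  have hindep : LinearIndependent ℚ (fun e : hBfin.toFinset => L.w e.1) :=
    L.indep _ x (fun e he => hA e (hBA (hBfin.mem_toFinset.mp he))) (by omega)
  have hindepW : LinearIndependent ℚ
      (fun e : hBfin.toFinset => (⟨L.w e.1, hW e (hBA (hBfin.mem_toFinset.mp e.2))⟩ : W)) :=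
    LinearIndependent.of_comp W.subtype hindep
  have := hindepW.fintype_card_le_finrank
  rw [Fintype.card_coe, hcard] at this
  omega

lemma ncard_edgesAt_closure_le (L : G.GKMLabel N m k) (s : Finset G.E) (hs : s.card < k)
    (x : G.V) :
    (G.edgesAt (N.Closure s) x).ncard ≤ s.card := by
  have hspan : Module.finrank ℚ (Submodule.span ℚ (L.w '' s)) ≤ s.card := by
    have := finrank_span_finset_le_card (R := ℚ) (s.image L.w)
    rw [Finset.coe_image] at this
    exact this.trans Finset.card_image_le
  exact (L.ncard_le_finrank_of_weight_mem (fun e he => he.2) _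
    (fun e he => L.weight_mem_span_of_mem_closure he.1) (by omega)).trans hspan

theorem isFace_closure [Finite G.E] (L : G.GKMLabel N m k) (s : Finset G.E) {v : G.V}
    (hv : ∀ e ∈ s, G.ini e = v) (hs : s.Nonempty) (hsk : s.card < k) :
    G.IsFace N s.card (N.Closure s) := by
  have hcount_v : (G.edgesAt (N.Closure s) v).ncard = s.card := by
    refine le_antisymm (L.ncard_edgesAt_closure_le s hsk v) ?_
    calc s.card = (s : Set G.E).ncard := (Set.ncard_coe_finset s).symm
      _ ≤ _ := Set.ncard_le_ncard
        (fun e he => ⟨subset_closure he, hv e he⟩ : (s : Set G.E) ⊆ G.edgesAt _ v)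
  obtain ⟨e₀, he₀⟩ := hs
  refine ⟨⟨e₀, subset_closure he₀⟩, isInvariant_closure.bar_mem,
    isInvariant_closure.nabla_mem, ?_, ?_⟩
  · rintro _ ⟨e, he, rfl⟩
    show (G.edgesAt _ _).ncard = _
    rw [isInvariant_closure.ncard_edgesAt_eq_of_reflTransGen
      (reachable_of_mem_closure hv he).1, hcount_v]
  · rintro _ ⟨e, he, rfl⟩ _ ⟨f, hf, rfl⟩
    exact (reflTransGen_adj_symm isInvariant_closure.bar_mem
      (reachable_of_mem_closure hv he).1).trans (reachable_of_mem_closure hv hf).1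

end GKMLabel

end PreGraph

open PreGraph

theorem unique_face_of_GKM_graph_general
    (G : PreGraph) (N : G.Connection) [Finite G.E]
    (m k : ℕ)
    (L : G.GKMLabel N m k)
    (v : G.V) (l : ℕ) (hl1 : 1 ≤ l) (hlk : l ≤ k - 1)
    (s : Finset G.E) (hcard : s.card = l) (hmem : ∀ e ∈ s, G.ini e = v) :
    ∃! S : Set G.E, G.IsFace N l S ∧ ∀ e ∈ s, e ∈ S := by
  subst hcard
  have hface := L.isFace_closure s hmem (Finset.card_pos.mp (by omega)) (by omega)
  refine ⟨N.Closure s, ⟨hface, Connection.subset_closure⟩, ?_⟩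
  rintro S ⟨hS, hsS⟩
  exact (hface.eq_of_subset hS (Connection.closure_subset hsS hS.isInvariant)).symm

/-- Let `Γ` be an `n`-valent GKM_k graph, `k ≥ 2`. Then for any
vertex `v` of `Γ` and any `l` distinct edges `e₁, …, e_l` meeting at `v`, with
`1 ≤ l ≤ k−1`, there exists a unique `l`-dimensional face of `Γ` (a nonempty
connected `l`-valent connection-invariant subgraph) containing `e₁, …, e_l`. -/
theorem unique_face_of_GKM_graph
    (G : PreGraph) (N : G.Connection) [Finite G.E]
    (n m k : ℕ) (hk : 2 ≤ k)
    (L : G.GKMLabel N m k) (hval : G.Valent n) (hconn : G.Connected)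
    (v : G.V) (l : ℕ) (hl1 : 1 ≤ l) (hlk : l ≤ k - 1)
    (s : Finset G.E) (hcard : s.card = l) (hmem : ∀ e ∈ s, G.ini e = v) :
    ∃! S : Set G.E, G.IsFace N l S ∧ ∀ e ∈ s, e ∈ S :=
  unique_face_of_GKM_graph_general G N m k L v l hl1 hlk s hcard hmem
end

section
/- Let (Γ̃, β̂) be a GKM_n graph with preferred signs (an invariant almost complex structure) whose underlying graph is the vertex-edge graph of a product of simplices P = ∏_i Δ^{n_i} embedded in ℝ^n. For a vertex v let σ_v be the n×n matrix whose columns are the edge vectors v_i − v to the adjacent vertices, and A_v the matrix whose columns are the corresponding weights β̂(e). Then the sign of det(σ_v)·det(A_v) is independent of the vertex v. Consequently the associated quasitoric manifold over P admits an invariant almost complex structure. -/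
/-!
Moving from a vertex `v` to its neighbour `v'` along an edge `e` of the `i`-th simplex factor,
the edges at `v'` correspond to the edges at `v` through a permutation `π`: the reversed edge
`ē` corresponds to `e`, an edge of the same factor to the edge at `v` with the same endpoint,
and an edge of another factor to its parallel copy. The rule `β̂(ē) = -β̂(e)` turns the column
of `ē` in `A_{v'}` into minus the column of `e` in `A_v`, and the connection rule makes every
other column of `A_{v'}` the corresponding column of `A_v` plus a multiple of the column of `e`.
The edge vectors in `σ_{v'}` obey the same rules, with multipliers `-1` and `0`. Hence both
determinants are multiplied by `-sign π`, so their product is unchanged along every edge, and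
any two vertices of `P` are joined by a path of edges.
-/

open Equiv Function

namespace Matrix

variable {ι R : Type*} [Fintype ι] [DecidableEq ι] [CommRing R]

theorem det_one_updateRow (j : ι) (u : ι → R) : ((1 : Matrix ι ι R).updateRow j u).det = u j := by
  have hu : ∑ k, u k • (1 : Matrix ι ι R) k = u := by
    ext l
    simp [Finset.sum_apply, one_apply]
  simpa [hu] using det_updateRow_sum (1 : Matrix ι ι R) j u

theorem det_eq_neg_of_transpose_eq {M N : Matrix ι ι R} {c₀ : ι} (h₀ : Nᵀ c₀ = -Mᵀ c₀)
    (h : ∀ c ≠ c₀, ∃ q : R, Nᵀ c = Mᵀ c + q • Mᵀ c₀) : N.det = -M.det := by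
  choose q hq using h
  let u : ι → R := fun c => if hc : c = c₀ then -1 else q c hc
  have hN : N = M * (1 : Matrix ι ι R).updateRow c₀ u := by
    ext r c
    rw [mul_apply]
    by_cases hc : c = c₀
    · subst hc
      rw [Finset.sum_eq_single c]
      · simpa [u] using congrFun h₀ r
      · intro y _ hy
        simp [hy]
      · simp
    · rw [Finset.sum_eq_add c₀ c (Ne.symm hc)]
      · simpa [u, updateRow_ne hc, hc, add_comm, mul_comm] using congrFun (hq c hc) r
      · rintro y - ⟨hy₀, hy⟩
        simp [updateRow_ne hy₀, hy]
      all_goals simp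
  rw [hN, det_mul, det_one_updateRow]
  simp [u]

def ColumnMove (π : Perm ι) (M N : Matrix ι ι R) : Prop :=
  ∃ c₁, Nᵀ c₁ = -Mᵀ (π c₁) ∧ ∀ c ≠ c₁, ∃ q : R, Nᵀ c = Mᵀ (π c) + q • Mᵀ (π c₁)

theorem ColumnMove.det_eq {π : Perm ι} {M N : Matrix ι ι R} (h : ColumnMove π M N) :
    N.det = -(Perm.sign π : R) * M.det := by
  obtain ⟨c₁, h₁, h⟩ := h
  rw [neg_mul, ← det_permute']
  exact det_eq_neg_of_transpose_eq h₁ h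

theorem ColumnMove.det_mul_det_eq {π : Perm ι} {M M' N N' : Matrix ι ι R}
    (hM : ColumnMove π M M') (hN : ColumnMove π N N') :
    M'.det * N'.det = M.det * N.det := by
  have hsign : (Perm.sign π : R) * Perm.sign π = 1 := by
    rw [← Int.cast_mul, ← Units.val_mul, Int.units_mul_self]
    simp
  rw [hM.det_eq, hN.det_eq]
  linear_combination (M.det * N.det) * hsign

end Matrix

theorem Function.apply_eq_of_forall_apply_update_eq {ι β : Type*} [Fintype ι] [DecidableEq ι]
    {α : ι → Type*} {f : (∀ i, α i) → β}
    (hf : ∀ v i (t : α i), t ≠ v i → f (update v i t) = f v) (v w : ∀ i, α i) : f v = f w := by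
  have key : ∀ s : Finset ι, f (s.piecewise w v) = f v := by
    intro s
    induction s using Finset.induction_on with
    | empty => simp
    | insert j s _ ih =>
      rw [Finset.piecewise_insert]
      by_cases hj : w j = s.piecewise w v j
      · rw [hj, update_eq_self, ih]
      · rw [hf _ _ _ hj, ih]
  simpa using (key Finset.univ).symm

namespace Fin

variable {n : ℕ}

def succAboveSwap (a t : Fin (n + 1)) : Perm (Fin n) :=
  (finSuccAboveEquiv t).trans <|
    ((swap t a).subtypeEquiv fun _ =>
      ((swap t a).injective.ne_iff' (swap_apply_left t a)).symm).trans
      (finSuccAboveEquiv a).symm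

theorem succAbove_succAboveSwap (a t : Fin (n + 1)) (j : Fin n) :
    a.succAbove (succAboveSwap a t j) = swap t a (t.succAbove j) := by
  have h : ∀ x, a.succAbove ((finSuccAboveEquiv a).symm x) = x := fun x => by
    simpa only [finSuccAboveEquiv_apply] using
      congrArg Subtype.val ((finSuccAboveEquiv a).apply_symm_apply x)
  simp [succAboveSwap, h, finSuccAboveEquiv_apply]

theorem succAboveSwap_eq {a t : Fin (n + 1)} {j₀ j₁ : Fin n} (h₀ : a.succAbove j₀ = t)
    (h₁ : t.succAbove j₁ = a) : succAboveSwap a t j₁ = j₀ :=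
  succAbove_right_injective <| by rw [succAbove_succAboveSwap, h₁, swap_apply_right, h₀]

end Fin

namespace ProductOfSimplices

open Matrix

variable {R : Type*} [CommRing R] {k : ℕ} {m : Fin k → ℕ}

def edgeMatrix
    (F : (v : ∀ i, Fin (m i + 1)) → (i : Fin k) → (t : Fin (m i + 1)) → t ≠ v i →
      (Σ i, Fin (m i)) → R)
    (v : ∀ i, Fin (m i + 1)) : Matrix (Σ i, Fin (m i)) (Σ i, Fin (m i)) R :=
  of fun r c => F v c.1 ((v c.1).succAbove c.2) (Fin.succAbove_ne _ _) r

def edgePerm (i : Fin k) (a t : Fin (m i + 1)) : Perm (Σ i, Fin (m i)) :=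
  sigmaCongrRight (Pi.mulSingle i (Fin.succAboveSwap a t))

theorem edgePerm_mk_self (i : Fin k) (a t : Fin (m i + 1)) (j : Fin (m i)) :
    edgePerm i a t ⟨i, j⟩ = ⟨i, Fin.succAboveSwap a t j⟩ := by
  simp [edgePerm]

theorem edgePerm_mk_of_ne {i b : Fin k} (hb : b ≠ i) (a t : Fin (m i + 1)) (j : Fin (m b)) :
    edgePerm i a t ⟨b, j⟩ = ⟨b, j⟩ := by
  simp [edgePerm, hb]

theorem edgeMatrix_columnMove
    (F : (v : ∀ i, Fin (m i + 1)) → (i : Fin k) → (t : Fin (m i + 1)) → t ≠ v i →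
      (Σ i, Fin (m i)) → R)
    (hrev : ∀ v i t (h : t ≠ v i) (h'' : v i ≠ update v i t i),
      F (update v i t) i (v i) h'' = -F v i t h)
    (hconn₁ : ∀ v i t t' (h : t ≠ v i) (h' : t' ≠ v i) (_ : t' ≠ t) (h'' : t' ≠ update v i t i),
      ∃ q : R, F (update v i t) i t' h'' = F v i t' h' + q • F v i t h)
    (hconn₂ : ∀ v i i' (_ : i' ≠ i) t t' (h : t ≠ v i) (h' : t' ≠ v i')
      (h'' : t' ≠ update v i t i'),
      ∃ q : R, F (update v i t) i' t' h'' = F v i' t' h' + q • F v i t h)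
    (v : ∀ i, Fin (m i + 1)) (i : Fin k) (t : Fin (m i + 1)) (ht : t ≠ v i) :
    ColumnMove (edgePerm i (v i) t) (edgeMatrix F v) (edgeMatrix F (update v i t)) := by
  have hF : ∀ {u a s s'} (h : s ≠ u a) (h' : s' ≠ u a), s = s' → F u a s h = F u a s' h' := by
    rintro _ _ _ _ _ _ rfl
    rfl
  obtain ⟨j₀, hj₀⟩ := Fin.exists_succAbove_eq ht
  obtain ⟨j₁, hj₁⟩ := Fin.exists_succAbove_eq ht.symm
  have hπ₁ : edgePerm i (v i) t ⟨i, j₁⟩ = ⟨i, j₀⟩ := by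
    rw [edgePerm_mk_self, Fin.succAboveSwap_eq hj₀ hj₁]
  refine ⟨⟨i, j₁⟩, ?_, ?_⟩
  · rw [hπ₁]
    have hne : v i ≠ update v i t i := by simpa using ht.symm
    change F (update v i t) i _ _ = -F v i _ _
    rw [hF _ hne (by simpa using hj₁), hF _ ht hj₀, hrev v i t ht hne]
  · rintro ⟨a, j⟩ hj
    rw [hπ₁]
    by_cases hai : a = i
    · subst hai
      have hj₁' : j ≠ j₁ := fun h => hj (h ▸ rfl)
      have ht' : t.succAbove j ≠ v a := fun h =>
        hj₁' (Fin.succAbove_right_injective (h.trans hj₁.symm))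
      have ht'' : t.succAbove j ≠ update v a t a := by simp
      obtain ⟨q, hq⟩ := hconn₁ v a t (t.succAbove j) ht ht' (Fin.succAbove_ne t j) ht''
      refine ⟨q, ?_⟩
      rw [edgePerm_mk_self]
      change F (update v a t) a _ _ = F v a _ _ + q • F v a _ _
      rw [hF _ ht'' (by simp), hq, hF _ ht hj₀]
      congr 2
      rw [Fin.succAbove_succAboveSwap, swap_apply_of_ne_of_ne (Fin.succAbove_ne t j) ht']
    · have hs : (v a).succAbove j ≠ update v i t a := by simp [hai]
      obtain ⟨q, hq⟩ := hconn₂ v i a hai t ((v a).succAbove j) ht (Fin.succAbove_ne _ _) hs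
      refine ⟨q, ?_⟩
      rw [edgePerm_mk_of_ne hai]
      change F (update v i t) a _ _ = F v a _ _ + q • F v i _ _
      rw [hF _ hs (by simp [hai]), hq, hF _ ht hj₀]

def vertexPos (p : ∀ i, Fin (m i + 1) → Fin (m i) → R) (v : ∀ i, Fin (m i + 1)) :
    (Σ i, Fin (m i)) → R :=
  fun r => p r.1 (v r.1) r.2

def edgeVector (p : ∀ i, Fin (m i + 1) → Fin (m i) → R) (v : ∀ i, Fin (m i + 1)) (i : Fin k)
    (t : Fin (m i + 1)) : (Σ i, Fin (m i)) → R :=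
  vertexPos p (update v i t) - vertexPos p v

variable (p : ∀ i, Fin (m i + 1) → Fin (m i) → R) (v : ∀ i, Fin (m i + 1)) (i : Fin k)
  (t : Fin (m i + 1))

theorem edgeVector_update_reverse :
    edgeVector p (update v i t) i (v i) = -edgeVector p v i t := by
  rw [edgeVector, edgeVector, update_idem, update_eq_self, neg_sub]

theorem edgeVector_update_same (t' : Fin (m i + 1)) :
    edgeVector p (update v i t) i t' = edgeVector p v i t' - edgeVector p v i t := by
  rw [edgeVector, edgeVector, edgeVector, update_idem, sub_sub_sub_cancel_right]

theorem edgeVector_update_of_ne {i' : Fin k} (hne : i' ≠ i) (t' : Fin (m i' + 1)) :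
    edgeVector p (update v i t) i' t' = edgeVector p v i' t' := by
  funext ⟨b, j⟩
  by_cases hb : b = i'
  · subst hb
    simp [edgeVector, vertexPos, hne]
  · by_cases hbi : b = i
    · subst hbi
      simp [edgeVector, vertexPos, hb]
    · simp [edgeVector, vertexPos, hb, hbi]

end ProductOfSimplices

open ProductOfSimplices

theorem sign_of_det_product_independent_of_vertex_general
    (k : ℕ) (m : Fin k → ℕ)
    (p : ∀ i : Fin k, Fin (m i + 1) → (Fin (m i) → ℝ))
    (wt : (v : ∀ i, Fin (m i + 1)) → (i : Fin k) → (t : Fin (m i + 1)) →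
      t ≠ v i → ((Σ i : Fin k, Fin (m i)) → ℝ))
    -- reversed edges carry opposite weights
    (hrev : ∀ (v : ∀ i, Fin (m i + 1)) (i : Fin k) (t : Fin (m i + 1))
      (h : t ≠ v i) (h'' : v i ≠ Function.update v i t i),
      wt (Function.update v i t) i (v i) h'' = - wt v i t h)
    -- connection relation within a factor
    (hconn₁ : ∀ (v : ∀ i, Fin (m i + 1)) (i : Fin k) (t t' : Fin (m i + 1))
      (h : t ≠ v i) (h' : t' ≠ v i) (htt' : t' ≠ t)
      (h'' : t' ≠ Function.update v i t i),
      ∃ q : ℤ, wt (Function.update v i t) i t' h'' =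
        wt v i t' h' + (q : ℝ) • wt v i t h)
    -- connection relation across factors (parallel transport)
    (hconn₂ : ∀ (v : ∀ i, Fin (m i + 1)) (i i' : Fin k) (hne : i' ≠ i)
      (t : Fin (m i + 1)) (t' : Fin (m i' + 1))
      (h : t ≠ v i) (h' : t' ≠ v i')
      (h'' : t' ≠ Function.update v i t i'),
      ∃ q : ℤ, wt (Function.update v i t) i' t' h'' =
        wt v i' t' h' + (q : ℝ) • wt v i t h) :
    ∀ v w : ∀ i, Fin (m i + 1),
      Real.sign
        ((Matrix.of fun (r c : Σ i : Fin k, Fin (m i)) =>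
            p r.1 ((Function.update v c.1 ((v c.1).succAbove c.2)) r.1) r.2 -
              p r.1 (v r.1) r.2).det *
         (Matrix.of fun (r c : Σ i : Fin k, Fin (m i)) =>
            wt v c.1 ((v c.1).succAbove c.2) (Fin.succAbove_ne _ _) r).det) =
      Real.sign
        ((Matrix.of fun (r c : Σ i : Fin k, Fin (m i)) =>
            p r.1 ((Function.update w c.1 ((w c.1).succAbove c.2)) r.1) r.2 -
              p r.1 (w r.1) r.2).det *
         (Matrix.of fun (r c : Σ i : Fin k, Fin (m i)) =>
            wt w c.1 ((w c.1).succAbove c.2) (Fin.succAbove_ne _ _) r).det) := by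
  have hσ := edgeMatrix_columnMove (fun v i t _ => edgeVector p v i t)
    (fun v i t _ _ => edgeVector_update_reverse p v i t)
    (fun v i t t' _ _ _ _ => ⟨-1, by rw [edgeVector_update_same, neg_one_smul, sub_eq_add_neg]⟩)
    (fun v i _ hne t t' _ _ _ =>
      ⟨0, by rw [edgeVector_update_of_ne p v i t hne, zero_smul, add_zero]⟩)
  have hA := edgeMatrix_columnMove wt hrev
    (fun v i t t' h h' htt' h'' => let ⟨q, hq⟩ := hconn₁ v i t t' h h' htt' h''; ⟨q, hq⟩)
    (fun v i i' hne t t' h h' h'' => let ⟨q, hq⟩ := hconn₂ v i i' hne t t' h h' h''; ⟨q, hq⟩)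
  intro v w
  exact congrArg Real.sign <| Function.apply_eq_of_forall_apply_update_eq
    (f := fun v => (edgeMatrix (fun v i t _ => edgeVector p v i t) v).det * (edgeMatrix wt v).det)
    (fun v i t ht => (hσ v i t ht).det_mul_det_eq (hA v i t ht)) v w

/-- let `(Γ̃, β̂)` be a GKM_n graph with preferred signs (an
invariant almost complex structure) whose underlying graph is the vertex-edge
graph of a product of simplices `P = ∏ᵢ Δ^{m i}` embedded in `ℝ^n`
(each factor embedded via affinely independent points `p i`). Vertices of `P`
are tuples `v : ∀ i, Fin (m i + 1)`; the edge of the factor `i` from `v` to the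
vertex with `i`-th coordinate `t ≠ v i` carries the signed weight
`β̂ v i t _ ∈ ℝ^n`, where `n = Σ m i` is realised as the sigma type
`ι = Σ i, Fin (m i)`. The signed weights satisfy `β̂(ē) = −β̂(e)`, the almost
complex connection relation `β̂(∇_{e}f) = β̂(f) + q·β̂(e)` with `q ∈ ℤ` (within a
factor and across factors, where the connection transports edges in parallel),
and the GKM_n condition (the weights at each vertex are linearly independent).
For a vertex `v` let `σ_v` be the matrix whose columns are the edge vectors to
the adjacent vertices and `A_v` the matrix whose columns are the corresponding
weights (edges at `v` enumerated via `Fin.succAbove`). Then the sign of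
`det σ_v · det A_v` is independent of the vertex `v`. (Consequently the
associated quasitoric manifold admits an invariant almost complex structure.) -/
theorem sign_of_det_product_independent_of_vertex
    (k : ℕ) (m : Fin k → ℕ) (hm : ∀ i, 1 ≤ m i)
    (p : ∀ i : Fin k, Fin (m i + 1) → (Fin (m i) → ℝ))
    (haff : ∀ i, AffineIndependent ℝ (p i))
    (wt : (v : ∀ i, Fin (m i + 1)) → (i : Fin k) → (t : Fin (m i + 1)) →
      t ≠ v i → ((Σ i : Fin k, Fin (m i)) → ℝ))
    -- reversed edges carry opposite weights
    (hrev : ∀ (v : ∀ i, Fin (m i + 1)) (i : Fin k) (t : Fin (m i + 1))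
      (h : t ≠ v i) (h'' : v i ≠ Function.update v i t i),
      wt (Function.update v i t) i (v i) h'' = - wt v i t h)
    -- connection relation within a factor
    (hconn₁ : ∀ (v : ∀ i, Fin (m i + 1)) (i : Fin k) (t t' : Fin (m i + 1))
      (h : t ≠ v i) (h' : t' ≠ v i) (htt' : t' ≠ t)
      (h'' : t' ≠ Function.update v i t i),
      ∃ q : ℤ, wt (Function.update v i t) i t' h'' =
        wt v i t' h' + (q : ℝ) • wt v i t h)
    -- connection relation across factors (parallel transport)
    (hconn₂ : ∀ (v : ∀ i, Fin (m i + 1)) (i i' : Fin k) (hne : i' ≠ i)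
      (t : Fin (m i + 1)) (t' : Fin (m i' + 1))
      (h : t ≠ v i) (h' : t' ≠ v i')
      (h'' : t' ≠ Function.update v i t i'),
      ∃ q : ℤ, wt (Function.update v i t) i' t' h'' =
        wt v i' t' h' + (q : ℝ) • wt v i t h)
    -- GKM_n condition: the n weights at any vertex are linearly independent
    (hind : ∀ v : ∀ i, Fin (m i + 1),
      LinearIndependent ℝ (fun c : Σ i : Fin k, Fin (m i) =>
        wt v c.1 ((v c.1).succAbove c.2) (Fin.succAbove_ne _ _))) :
    ∀ v w : ∀ i, Fin (m i + 1),
      Real.sign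
        ((Matrix.of fun (r c : Σ i : Fin k, Fin (m i)) =>
            p r.1 ((Function.update v c.1 ((v c.1).succAbove c.2)) r.1) r.2 -
              p r.1 (v r.1) r.2).det *
         (Matrix.of fun (r c : Σ i : Fin k, Fin (m i)) =>
            wt v c.1 ((v c.1).succAbove c.2) (Fin.succAbove_ne _ _) r).det) =
      Real.sign
        ((Matrix.of fun (r c : Σ i : Fin k, Fin (m i)) =>
            p r.1 ((Function.update w c.1 ((w c.1).succAbove c.2)) r.1) r.2 -
              p r.1 (w r.1) r.2).det *
         (Matrix.of fun (r c : Σ i : Fin k, Fin (m i)) =>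
            wt w c.1 ((w c.1).succAbove c.2) (Fin.succAbove_ne _ _) r).det) :=
  sign_of_det_product_independent_of_vertex_general k m p wt hrev hconn₁ hconn₂
end

section
/- Let M be a quasitoric manifold over the cube [−1,1]^n (n ≥ 3) with characteristic function λ(F_{n,±1}) = ±e_n, λ(F_{i,±1}) = e_i ± e_n for i = 1,…,n−1, and let τ be the free involution on M induced by (x, Σα_i e_i) ↦ (−x, Σ_{i<n} α_i e_i − α_n e_n + (1/2)e_1). Then in the rational cohomology of N = M/τ one has b_2(N) = 1, and the generator v of H^2(N; ℚ) satisfies v^2 ≠ 0; indeed v^2·[v_{n,1}]^{n−2} = (−2)^{n−1}(n−1)!·∏_{i=1}^n [v_{i,1}] ≠ 0 in H^{2n}(M; ℚ). -/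
/-!
Write `x_i = [v_{i,1}]`, `y_i = [v_{i,−1}]` and `σ = ∑_{i<n} x_i`. The linear relations give
`y_i = −x_i` for `i < n` and `y_n = x_n + 2σ`, so `x_i² = 0` for `i < n` and `x_n² = −2σ x_n`.
An invariant class `∑ c_i x_i + ∑ d_i y_i` has vanishing antisymmetric part
`∑ (c_i − d_i)(x_i − y_i)`, and its symmetric part is a multiple of `x_n + y_n` because
`x_i + y_i = 0` for `i < n`. Moreover `(x_n + y_n)² = 4σ²`, `x_n^{n−2} = (−2σ)^{n−3} x_n` and
`σ^{n−1} = (n−1)! ∏_{i<n} x_i`, which gives the formula for `v² x_n^{n−2}`.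
Finally `∏ x_i ≠ 0`: sending `x_i ↦ e_i` (`i < n`) and `x_n ↦ u` defines a map to
`A[u]/(u(u + 2σ))` with `A = ℚ[e_i]/(e_i²)`, under which `∏ x_i` becomes `(∏_{i<n} e_i) u`,
a nonzero element of the free `A`-module with basis `1, u`.
-/

noncomputable section

open MvPolynomial

/-- The Davis–Januszkiewicz ideal of the quasitoric manifold `M` over the cube
`[−1,1]^n` with characteristic function `λ(F_{n,±1}) = ±e_n`,
`λ(F_{i,±1}) = e_i ± e_n` (`i < n`): the variable `X (i, true)` is the
equivariant Poincaré dual `v_{i,1}`, and `X (i, false)` is `v_{i,−1}`; `lst`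
denotes the index `n`. The ideal is generated by the Stanley–Reisner relations
`v_{i,1}·v_{i,−1} = 0` and the linear relations `v_{i,1} = −v_{i,−1}` (`i ≠ n`)
and `v_{n,1} = v_{n,−1} − Σ_{i<n}(v_{i,1} − v_{i,−1})`. -/
def djIdeal (n : ℕ) (lst : Fin n) : Ideal (MvPolynomial (Fin n × Bool) ℚ) :=
  Ideal.span
    ({q | ∃ i : Fin n, q = X (i, true) * X (i, false)} ∪
     {q | ∃ i : Fin n, i ≠ lst ∧ q = X (i, true) + X (i, false)} ∪
     {X (lst, true) - X (lst, false) +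
       ∑ i ∈ Finset.univ.erase lst, (X (i, true) - X (i, false))})

/-- The class `[v_{i,1}]` in `H^*(M;ℚ)`. -/
def djX (n : ℕ) (lst : Fin n) (i : Fin n) :
    MvPolynomial (Fin n × Bool) ℚ ⧸ djIdeal n lst :=
  Ideal.Quotient.mk (djIdeal n lst) (X (i, true))

/-- The class `[v_{i,−1}]` in `H^*(M;ℚ)`. -/
def djY (n : ℕ) (lst : Fin n) (i : Fin n) :
    MvPolynomial (Fin n × Bool) ℚ ⧸ djIdeal n lst :=
  Ideal.Quotient.mk (djIdeal n lst) (X (i, false))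


open Finset

theorem add_pow_succ_of_sq_eq_zero {R : Type*} [CommRing R] {a : R} (ha : a ^ 2 = 0) (b : R)
    (k : ℕ) : (a + b) ^ (k + 1) = b ^ (k + 1) + (k + 1) * a * b ^ k := by
  induction k with
  | zero => ring
  | succ k ih =>
    rw [pow_succ, ih]
    push_cast
    linear_combination (k + 1 : R) * b ^ k * ha

theorem Finset.sum_pow_card_of_sq_eq_zero {R ι : Type*} [CommRing R] [DecidableEq ι]
    (s : Finset ι) {a : ι → R} (ha : ∀ i ∈ s, a i ^ 2 = 0) :
    (∑ i ∈ s, a i) ^ s.card = s.card.factorial * ∏ i ∈ s, a i := by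
  induction s using Finset.induction with
  | empty => simp
  | insert j s hj ih =>
    have ih := ih fun i hi => ha i (mem_insert_of_mem hi)
    have hvanish : (∑ i ∈ s, a i) ^ (s.card + 1) = 0 := by
      rw [pow_succ, ih, mul_assoc, mul_sum]
      refine mul_eq_zero_of_right _ (sum_eq_zero fun i hi => ?_)
      rw [← mul_prod_erase s a hi, mul_comm, ← mul_assoc, ← sq, ha i (mem_insert_of_mem hi),
        zero_mul]
    rw [sum_insert hj, card_insert_of_notMem hj,
      add_pow_succ_of_sq_eq_zero (ha j (mem_insert_self j s)), hvanish, ih, prod_insert hj,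
      Nat.factorial_succ]
    push_cast
    ring

theorem MvPolynomial.prod_X_notMem_span_X_sq {σ R : Type*} [CommSemiring R] [Nontrivial R]
    (s : Finset σ) :
    ∏ i ∈ s, (X i : MvPolynomial σ R) ∉ Ideal.span (Set.range fun i => X i ^ 2) := by
  classical
  have hspan : Set.range (fun i => (X i : MvPolynomial σ R) ^ 2) =
      (fun m => monomial m 1) '' Set.range fun i => Finsupp.single i 2 := by
    rw [← Set.range_comp]
    congr 1
    funext i
    exact X_pow_eq_monomial
  have hprod : ∏ i ∈ s, (X i : MvPolynomial σ R) =
      monomial (∑ i ∈ s, Finsupp.single i 1) 1 := by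
    rw [monomial_sum_one]; rfl
  rw [hspan, hprod, mem_ideal_span_monomial_image, support_monomial, if_neg one_ne_zero]
  simp only [mem_singleton, forall_eq, Set.mem_range, exists_exists_eq_and,
    Finsupp.single_le_iff, Finsupp.finsetSum_apply, Finsupp.single_apply]
  rintro ⟨i, hi⟩
  rw [sum_ite_eq'] at hi
  split_ifs at hi <;> omega

abbrev SqZeroPoly (σ : Type*) : Type _ :=
  MvPolynomial σ ℚ ⧸ Ideal.span (Set.range fun i : σ => (X i : MvPolynomial σ ℚ) ^ 2)

namespace SqZeroPoly

variable {σ : Type*}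

def e (i : σ) : SqZeroPoly σ := Ideal.Quotient.mk _ (X i)

theorem e_sq (i : σ) : e i ^ 2 = 0 := by
  rw [e, ← map_pow, Ideal.Quotient.eq_zero_iff_mem]
  exact Ideal.subset_span ⟨i, rfl⟩

theorem prod_e_ne_zero (s : Finset σ) : ∏ i ∈ s, e i ≠ 0 := by
  simp only [e, ← map_prod, ne_eq, Ideal.Quotient.eq_zero_iff_mem]
  exact prod_X_notMem_span_X_sq s

end SqZeroPoly

theorem AdjoinRoot.of_mul_root_ne_zero {A : Type*} [CommRing A] {f : Polynomial A}
    (hf : f.Monic) (hdeg : 1 < f.natDegree) {a : A} (ha : a ≠ 0) : of f a * root f ≠ 0 := by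
  rw [← mk_C, ← mk_X, ← map_mul]
  have hdeg_a := Polynomial.natDegree_C_mul_X a ha
  exact mk_ne_zero_of_natDegree_lt hf (Polynomial.ne_zero_of_natDegree_gt (n := 0) (by omega))
    (by omega)

section Relations

variable (n : ℕ) (lst : Fin n)

theorem djX_mul_djY (i : Fin n) : djX n lst i * djY n lst i = 0 := by
  rw [djX, djY, ← map_mul, Ideal.Quotient.eq_zero_iff_mem]
  exact Ideal.subset_span (Or.inl (Or.inl ⟨i, rfl⟩))

variable {n lst} in
theorem djX_add_djY_of_ne {i : Fin n} (hi : i ≠ lst) : djX n lst i + djY n lst i = 0 := by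
  rw [djX, djY, ← map_add, Ideal.Quotient.eq_zero_iff_mem]
  exact Ideal.subset_span (Or.inl (Or.inr ⟨i, hi, rfl⟩))

variable {n lst} in
theorem djX_sq_of_ne {i : Fin n} (hi : i ≠ lst) : djX n lst i ^ 2 = 0 := by
  linear_combination djX n lst i * djX_add_djY_of_ne hi - djX_mul_djY n lst i

theorem djY_lst : djY n lst lst = djX n lst lst + 2 * ∑ i ∈ univ.erase lst, djX n lst i := by
  have hlin : djX n lst lst - djY n lst lst +
      ∑ i ∈ univ.erase lst, (djX n lst i - djY n lst i) = 0 := by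
    simp only [djX, djY, ← map_sub, ← map_sum, ← map_add, Ideal.Quotient.eq_zero_iff_mem]
    exact Ideal.subset_span (Or.inr rfl)
  have hsum : ∑ i ∈ univ.erase lst, (djX n lst i - djY n lst i) =
      2 * ∑ i ∈ univ.erase lst, djX n lst i := by
    rw [mul_sum]
    refine sum_congr rfl fun i hi => ?_
    linear_combination -djX_add_djY_of_ne (ne_of_mem_erase hi)
  linear_combination hsum - hlin

theorem djX_lst_pow_succ (k : ℕ) :
    djX n lst lst ^ (k + 1) = (-2 * ∑ i ∈ univ.erase lst, djX n lst i) ^ k * djX n lst lst := by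
  induction k with
  | zero => ring
  | succ k ih =>
    have hsq := djX_mul_djY n lst lst
    rw [djY_lst] at hsq
    rw [pow_succ, ih]
    linear_combination (-2 * ∑ i ∈ univ.erase lst, djX n lst i) ^ k * hsq

theorem djX_add_djY_lst_sq :
    (djX n lst lst + djY n lst lst) ^ 2 = 4 * (∑ i ∈ univ.erase lst, djX n lst i) ^ 2 := by
  have hsq := djX_mul_djY n lst lst
  rw [djY_lst] at hsq ⊢
  linear_combination 4 * hsq

theorem sum_djX_pow : (∑ i ∈ univ.erase lst, djX n lst i) ^ (n - 1) =
    (n - 1).factorial * ∏ i ∈ univ.erase lst, djX n lst i := by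
  have hcard : (univ.erase lst).card = n - 1 := by simp
  rw [← hcard]
  exact sum_pow_card_of_sq_eq_zero _ fun i hi => djX_sq_of_ne (ne_of_mem_erase hi)

theorem djX_add_djY_lst_sq_mul_djX_lst_pow (hn : 3 ≤ n) :
    (djX n lst lst + djY n lst lst) ^ 2 * djX n lst lst ^ (n - 2) =
      algebraMap ℚ _ ((-2 : ℚ) ^ (n - 1) * ((n - 1).factorial : ℚ)) * ∏ i, djX n lst i := by
  obtain ⟨k, rfl⟩ : ∃ k, n = k + 3 := ⟨n - 3, by omega⟩
  have hpow := djX_lst_pow_succ (k + 3) lst k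
  have hS := sum_djX_pow (k + 3) lst
  simp only [show k + 3 - 2 = k + 1 by omega, show k + 3 - 1 = k + 2 by omega] at hS ⊢
  rw [djX_add_djY_lst_sq, hpow, ← mul_prod_erase univ _ (mem_univ lst), map_mul, map_pow,
    map_neg, map_ofNat, map_natCast]
  linear_combination (-2) ^ k * 4 * djX (k + 3) lst lst * hS

theorem exists_smul_eq_of_invariant (c d : Fin n → ℚ)
    (hinv : ∑ i, c i • djX n lst i + ∑ i, d i • djY n lst i =
      ∑ i, c i • djY n lst i + ∑ i, d i • djX n lst i) :
    ∃ t : ℚ, ∑ i, c i • djX n lst i + ∑ i, d i • djY n lst i =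
      t • (djX n lst lst + djY n lst lst) := by
  refine ⟨(c lst + d lst) / 2, ?_⟩
  have hsym : ∑ i, (c i + d i) • (djX n lst i + djY n lst i) =
      (c lst + d lst) • (djX n lst lst + djY n lst lst) :=
    sum_eq_single lst (fun i _ hi => by rw [djX_add_djY_of_ne hi, smul_zero]) (by simp)
  have hanti : ∑ i, (c i - d i) • (djX n lst i - djY n lst i) = 0 := by
    simp only [sub_smul, smul_sub, sum_sub_distrib]
    linear_combination (norm := module) hinv
  calc ∑ i, c i • djX n lst i + ∑ i, d i • djY n lst i
      = (1 / 2 : ℚ) • ∑ i, (c i + d i) • (djX n lst i + djY n lst i) +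
        (1 / 2 : ℚ) • ∑ i, (c i - d i) • (djX n lst i - djY n lst i) := by
        simp only [smul_add, add_smul, smul_sub, sub_smul, sum_add_distrib, sum_sub_distrib]
        module
    _ = ((c lst + d lst) / 2) • (djX n lst lst + djY n lst lst) := by
        rw [hsym, hanti]
        module

end Relations

section Model

variable (n : ℕ) (lst : Fin n)

def djSigma : SqZeroPoly (Fin n) := ∑ i ∈ univ.erase lst, SqZeroPoly.e i

def djPoly : Polynomial (SqZeroPoly (Fin n)) :=
  Polynomial.X * (Polynomial.X + Polynomial.C (2 * djSigma n lst))

theorem djPoly_monic : (djPoly n lst).Monic :=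
  Polynomial.monic_X.mul (Polynomial.monic_X_add_C _)

theorem djPoly_natDegree : (djPoly n lst).natDegree = 2 := by
  have : Nontrivial (SqZeroPoly (Fin n)) := ⟨⟨_, _, SqZeroPoly.prod_e_ne_zero ∅⟩⟩
  rw [djPoly, Polynomial.natDegree_X_mul (Polynomial.X_add_C_ne_zero _),
    Polynomial.natDegree_X_add_C]

abbrev djModel : Type := AdjoinRoot (djPoly n lst)

def djModelGen : Fin n × Bool → djModel n lst
  | (i, true) =>
    if i = lst then AdjoinRoot.root _ else AdjoinRoot.of _ (SqZeroPoly.e i)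
  | (i, false) =>
    if i = lst then AdjoinRoot.root _ + AdjoinRoot.of _ (2 * djSigma n lst)
    else -AdjoinRoot.of _ (SqZeroPoly.e i)

theorem djIdeal_le_ker_aeval_djModelGen :
    djIdeal n lst ≤ RingHom.ker (aeval (djModelGen n lst)) := by
  rw [djIdeal, Ideal.span_le]
  rintro q ((⟨i, rfl⟩ | ⟨i, hi, rfl⟩) | rfl) <;>
    simp only [SetLike.mem_coe, RingHom.mem_ker, map_mul, map_add, map_sub, map_sum, aeval_X]
  · by_cases hi : i = lst
    · simp only [djModelGen, if_pos hi]
      rw [← AdjoinRoot.mk_X, ← AdjoinRoot.mk_C, ← map_add, ← map_mul]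
      exact AdjoinRoot.mk_self
    · simp only [djModelGen, if_neg hi]
      rw [mul_neg, ← sq, ← map_pow, SqZeroPoly.e_sq, map_zero, neg_zero]
  · simp only [djModelGen, if_neg hi, add_neg_cancel]
  · have hsum : ∑ i ∈ univ.erase lst,
        (djModelGen n lst (i, true) - djModelGen n lst (i, false)) =
          AdjoinRoot.of _ (2 * djSigma n lst) := by
      rw [djSigma, mul_sum, map_sum]
      refine sum_congr rfl fun i hi => ?_
      simp only [djModelGen, if_neg (ne_of_mem_erase hi), map_mul, map_ofNat]
      ring
    rw [hsum]
    simp only [djModelGen, ↓reduceIte]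
    ring

def djLift : (MvPolynomial (Fin n × Bool) ℚ ⧸ djIdeal n lst) →ₐ[ℚ] djModel n lst :=
  Ideal.Quotient.liftₐ _ (aeval (djModelGen n lst))
    fun _ ha => RingHom.mem_ker.mp (djIdeal_le_ker_aeval_djModelGen n lst ha)

theorem djLift_djX (i : Fin n) : djLift n lst (djX n lst i) = djModelGen n lst (i, true) := by
  rw [djLift, djX]
  exact aeval_X _ _

theorem prod_djX_ne_zero : ∏ i, djX n lst i ≠ 0 := by
  have himage : djLift n lst (∏ i, djX n lst i) =
      AdjoinRoot.of _ (∏ i ∈ univ.erase lst, SqZeroPoly.e i) * AdjoinRoot.root _ := by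
    rw [map_prod, ← mul_prod_erase univ _ (mem_univ lst), map_prod, mul_comm]
    simp only [djLift_djX, djModelGen, ↓reduceIte]
    congr 1
    exact prod_congr rfl fun i hi => if_neg (ne_of_mem_erase hi)
  intro h
  rw [h, map_zero] at himage
  exact AdjoinRoot.of_mul_root_ne_zero (djPoly_monic n lst) (by rw [djPoly_natDegree]; norm_num)
    (SqZeroPoly.prod_e_ne_zero _) himage.symm

end Model

theorem quotient_of_cube_quasitoric_has_b2_one_and_square_nonzero_general
    (n : ℕ) (hn : 3 ≤ n) (lst : Fin n) :
    (∀ c d : Fin n → ℚ,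
      (∑ i, c i • djX n lst i + ∑ i, d i • djY n lst i =
        ∑ i, c i • djY n lst i + ∑ i, d i • djX n lst i) →
      ∃ t : ℚ, ∑ i, c i • djX n lst i + ∑ i, d i • djY n lst i =
        t • (djX n lst lst + djY n lst lst)) ∧
    ((djX n lst lst + djY n lst lst) ^ 2 * (djX n lst lst) ^ (n - 2) =
      algebraMap ℚ _ ((-2 : ℚ) ^ (n - 1) * (Nat.factorial (n - 1) : ℚ)) *
        ∏ i, djX n lst i) ∧
    (∏ i, djX n lst i ≠ 0) ∧
    (djX n lst lst + djY n lst lst) ^ 2 ≠ 0 := by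
  have htop := djX_add_djY_lst_sq_mul_djX_lst_pow n lst hn
  refine ⟨exists_smul_eq_of_invariant n lst, htop, prod_djX_ne_zero n lst, fun hsq => ?_⟩
  have hcoeff : (-2 : ℚ) ^ (n - 1) * ((n - 1).factorial : ℚ) ≠ 0 := by positivity
  rw [hsq, zero_mul, ← Algebra.smul_def, eq_comm, smul_eq_zero] at htop
  exact htop.elim hcoeff (prod_djX_ne_zero n lst)

/-- for the quasitoric manifold `M` over `[−1,1]^n` (`n ≥ 3`)
with the above characteristic function and the free involution `τ` swapping
`v_{i,1} ↔ v_{i,−1}`, the quotient `N = M/τ` has `b₂(N;ℚ) = 1`: every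
`τ`-invariant degree-two class is a rational multiple of
`v = [v_{n,1}] + [v_{n,−1}]`, and this generator satisfies
`v²·[v_{n,1}]^{n−2} = (−2)^{n−1}·(n−1)!·∏ᵢ [v_{i,1}] ≠ 0` in `H^{2n}(M;ℚ)`;
in particular `v² ≠ 0`. -/
theorem quotient_of_cube_quasitoric_has_b2_one_and_square_nonzero
    (n : ℕ) (hn : 3 ≤ n) (lst : Fin n) (hlst : (lst : ℕ) = n - 1) :
    (∀ c d : Fin n → ℚ,
      (∑ i, c i • djX n lst i + ∑ i, d i • djY n lst i =
        ∑ i, c i • djY n lst i + ∑ i, d i • djX n lst i) →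
      ∃ t : ℚ, ∑ i, c i • djX n lst i + ∑ i, d i • djY n lst i =
        t • (djX n lst lst + djY n lst lst)) ∧
    ((djX n lst lst + djY n lst lst) ^ 2 * (djX n lst lst) ^ (n - 2) =
      algebraMap ℚ _ ((-2 : ℚ) ^ (n - 1) * (Nat.factorial (n - 1) : ℚ)) *
        ∏ i, djX n lst i) ∧
    (∏ i, djX n lst i ≠ 0) ∧
    (djX n lst lst + djY n lst lst) ^ 2 ≠ 0 :=
  quotient_of_cube_quasitoric_has_b2_one_and_square_nonzero_general n hn lst
end
end
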